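/- (Theorem 2(iv), fluid model) Suppose λ_a/(2μ_a) + λ_b/μ_b < T ≤ λ_a/μ_a + λ_b/μ_b. Set α := (2μ_a/λ_a)(λ_a/μ_a + λ_b/μ_b − T), t_a := λ_a α/(2μ_a), and t_b := T − λ_b/μ_b. Define F_a(t) = α for t ∈ [0,t_a), F_a(t) = α + (μ_a/λ_a)(t − t_a) for t ∈ [t_a,t_b], F_a(t) = 1 for t ∈ [t_b,T]; and F_b(t) = 0 for t ∈ [0,t_b), F_b(t) = (μ_b/λ_b)(t − t_b) for t ∈ [t_b,T]. Then: 0 ≤ α < 1; 0 ≤ t_a < t_b < T; F_a(t_b) = 1; F_b(T) = 1; and with q_0 = λ_a α/2 one has: q_a(t) = q_0 for all t ∈ [t_a,t_b], q_a(t) ≥ q_0 for all t ∈ (0,t_a) ∪ (t_b,T], q_b(t) = λ_a − μ_b t_b for all t ∈ [t_b,T], q_b(t) ≥ λ_a − μ_b t_b for all t ∈ (0,t_b), and q_0 ≥ λ_a − μ_b t_b. Consequently (F_a,F_b) is a Nash equilibrium of the fluid arrival game. -/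

import Mathlib

/-- Extension of a cdf `F` defined on `[0,T]` to all of `ℝ`. -/
noncomputable def Fext (T : ℝ) (F : ℝ → ℝ) (t : ℝ) : ℝ :=
  if t < 0 then 0 else if t ≤ T then F t else F T

/-- Support of the Borel measure on `[0,T]` induced by the cdf `F`:
points every neighbourhood of which carries positive mass. -/
def fluidSupport (T : ℝ) (F : ℝ → ℝ) : Set ℝ :=
  {t | t ∈ Set.Icc 0 T ∧ ∀ ε > 0, Fext T F (t - ε) < Fext T F (t + ε)}

/-- Queue (cost) faced by a belief-`mu` customer arriving at time `t`:
`q_0 = (λ_a F_a(0) + λ_b F_b(0))/2` at the opening, and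
`q(t) = λ_a F_a(t) + λ_b F_b(t) - μ t` for `t > 0`. -/
noncomputable def cost (la lb mu : ℝ) (Fa Fb : ℝ → ℝ) (t : ℝ) : ℝ :=
  if t = 0 then (la * Fa 0 + lb * Fb 0) / 2
  else la * Fa t + lb * Fb t - mu * t

/-- Nash equilibrium of the fluid arrival game: on the support of its own arrival
distribution each type's queue is minimal over all times in `[0,T]`. -/
def IsFluidNash (la lb mua mub T : ℝ) (Fa Fb : ℝ → ℝ) : Prop :=
  (∀ t ∈ fluidSupport T Fa, ∀ s ∈ Set.Icc 0 T,
    cost la lb mua Fa Fb t ≤ cost la lb mua Fa Fb s) ∧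
  (∀ t ∈ fluidSupport T Fb, ∀ s ∈ Set.Icc 0 T,
    cost la lb mub Fa Fb t ≤ cost la lb mub Fa Fb s)

/-!
On `[t_a, t_b]` type-`a` customers arrive at exactly the rate `μ_a`, so the queue a type-`a`
customer expects stays at its value `q_0 = λ_a α / 2 = μ_a t_a` at the opening; before `t_a`
nobody arrives and that queue drains from `2 μ_a t_a`, and after `t_b` type-`b` customers
arrive at rate `μ_b > μ_a`, so it only grows. Likewise the queue a type-`b` customer expects is
constant on `[t_b, T]` and, since it decreases at rate at least `μ_b - μ_a > 0` before `t_b`,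
it is larger earlier. Both arrival distributions are flat off these intervals, so their
supports lie where the respective queues are minimal.
-/

open Set Filter Topology

section

variable {la lb mu mua mub T t : ℝ} {F Fa Fb : ℝ → ℝ}

theorem Fext_of_mem_Icc (ht : t ∈ Icc 0 T) : Fext T F t = F t := by
  simp [Fext, not_lt.mpr ht.1, ht.2]

theorem Fext_of_neg (ht : t < 0) : Fext T F t = 0 := by
  simp [Fext, ht]

theorem Fext_of_lt (h0 : 0 ≤ t) (hT : T < t) : Fext T F t = F T := by
  simp [Fext, not_lt.mpr h0, not_le.mpr hT]

theorem notMem_fluidSupport_of_eventually_eq {c : ℝ} (h : ∀ᶠ x in 𝓝 t, Fext T F x = c) :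
    t ∉ fluidSupport T F := by
  rintro ⟨-, hsupp⟩
  obtain ⟨ε, hε, hball⟩ := Metric.eventually_nhds_iff.mp h
  have hleft : Fext T F (t - ε / 2) = c := hball (by rw [Real.dist_eq, abs_lt]; constructor <;> linarith)
  have hright : Fext T F (t + ε / 2) = c := hball (by rw [Real.dist_eq, abs_lt]; constructor <;> linarith)
  exact (hsupp (ε / 2) (half_pos hε)).ne (hleft.trans hright.symm)

theorem cost_zero :
    cost la lb mu Fa Fb 0 = (la * Fa 0 + lb * Fb 0) / 2 :=
  if_pos rfl

theorem cost_of_ne_zero (ht : t ≠ 0) :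
    cost la lb mu Fa Fb t = la * Fa t + lb * Fb t - mu * t :=
  if_neg ht

theorem isFluidNash_of_forall_le (qa qb : ℝ)
    (hsuppA : ∀ t ∈ fluidSupport T Fa, cost la lb mua Fa Fb t = qa)
    (hminA : ∀ s ∈ Icc 0 T, qa ≤ cost la lb mua Fa Fb s)
    (hsuppB : ∀ t ∈ fluidSupport T Fb, cost la lb mub Fa Fb t = qb)
    (hminB : ∀ s ∈ Icc 0 T, qb ≤ cost la lb mub Fa Fb s) :
    IsFluidNash la lb mua mub T Fa Fb :=
  ⟨fun t ht s hs => (hsuppA t ht).trans_le (hminA s hs),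
    fun t ht s hs => (hsuppB t ht).trans_le (hminB s hs)⟩

end

/-- The case-(iv) profile, parametrised by `t_a` and `t_b`: `λ_a α = 2 μ_a t_a` is the atom of
`F_a` at `0`, and `λ_a = μ_a (t_a + t_b)`, `λ_b = μ_b (T - t_b)` say that the densities
`μ_a / λ_a` on `[t_a, t_b]` and `μ_b / λ_b` on `[t_b, T]` exhaust the two populations. -/
structure IsCaseIVProfile (la lb mua mub T alpha ta tb : ℝ) (Fa Fb : ℝ → ℝ) : Prop where
  la_pos : 0 < la
  lb_pos : 0 < lb
  mua_pos : 0 < mua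
  mua_lt_mub : mua < mub
  ta_nonneg : 0 ≤ ta
  ta_lt_tb : ta < tb
  tb_lt_T : tb < T
  atom_eq : la * alpha = 2 * mua * ta
  la_eq : mua * (ta + tb) = la
  lb_eq : mub * (T - tb) = lb
  Fa_of_lt : ∀ t ∈ Icc 0 T, t < ta → Fa t = alpha
  Fa_of_mem : ∀ t ∈ Icc 0 T, ta ≤ t → t ≤ tb → Fa t = alpha + (mua / la) * (t - ta)
  Fa_of_ge : ∀ t ∈ Icc 0 T, tb ≤ t → Fa t = 1
  Fb_of_lt : ∀ t ∈ Icc 0 T, t < tb → Fb t = 0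
  Fb_of_ge : ∀ t ∈ Icc 0 T, tb ≤ t → Fb t = (mub / lb) * (t - tb)

namespace IsCaseIVProfile

variable {la lb mua mub T alpha ta tb s t x : ℝ} {Fa Fb : ℝ → ℝ}
  (P : IsCaseIVProfile la lb mua mub T alpha ta tb Fa Fb)
include P

theorem tb_pos : 0 < tb := P.ta_nonneg.trans_lt P.ta_lt_tb

theorem T_pos : 0 < T := P.tb_pos.trans P.tb_lt_T

theorem alpha_nonneg : 0 ≤ alpha := by
  have : 0 ≤ la * alpha := P.atom_eq ▸ mul_nonneg (by linarith [P.mua_pos]) P.ta_nonneg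
  exact (mul_nonneg_iff_of_pos_left P.la_pos).mp this

theorem alpha_lt_one : alpha < 1 := by
  have : la * alpha < la * 1 := by
    have := mul_lt_mul_of_pos_left P.ta_lt_tb P.mua_pos
    linarith [P.atom_eq, P.la_eq]
  exact lt_of_mul_lt_mul_left this P.la_pos.le

theorem Fb_of_le (ht : t ∈ Icc 0 T) (htb : t ≤ tb) : Fb t = 0 := by
  rcases htb.lt_or_eq with htb | rfl
  · exact P.Fb_of_lt t ht htb
  · simp [P.Fb_of_ge t ht le_rfl]

theorem Fa_zero : Fa 0 = alpha := by
  have h0 : (0 : ℝ) ∈ Icc 0 T := ⟨le_rfl, P.T_pos.le⟩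
  rcases P.ta_nonneg.lt_or_eq with hta | hta
  · exact P.Fa_of_lt 0 h0 hta
  · simp [P.Fa_of_mem 0 h0 hta.ge P.tb_pos.le, ← hta]

theorem Fb_zero : Fb 0 = 0 := P.Fb_of_le ⟨le_rfl, P.T_pos.le⟩ P.tb_pos.le

theorem Fa_tb : Fa tb = 1 := by
  rw [P.Fa_of_ge tb ⟨P.tb_pos.le, P.tb_lt_T.le⟩ le_rfl]

theorem Fb_T : Fb T = 1 := by
  rw [P.Fb_of_ge T ⟨P.T_pos.le, le_rfl⟩ P.tb_lt_T.le, div_mul_eq_mul_div, P.lb_eq,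
    div_self P.lb_pos.ne']

theorem input_of_lt_ta (ht : t ∈ Ico 0 ta) : la * Fa t + lb * Fb t = 2 * mua * ta := by
  have ht' : t ∈ Icc 0 T := ⟨ht.1, (ht.2.trans (P.ta_lt_tb.trans P.tb_lt_T)).le⟩
  rw [P.Fa_of_lt t ht' ht.2, P.Fb_of_le ht' (ht.2.trans P.ta_lt_tb).le, P.atom_eq]
  ring

theorem input_of_mem_Icc_ta_tb (ht : t ∈ Icc ta tb) :
    la * Fa t + lb * Fb t = mua * (t + ta) := by
  have ht' : t ∈ Icc 0 T := ⟨P.ta_nonneg.trans ht.1, ht.2.trans P.tb_lt_T.le⟩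
  have := P.la_pos
  rw [P.Fa_of_mem t ht' ht.1 ht.2, P.Fb_of_le ht' ht.2]
  field_simp
  linear_combination P.atom_eq

theorem input_of_mem_Icc_tb_T (ht : t ∈ Icc tb T) :
    la * Fa t + lb * Fb t = la + mub * (t - tb) := by
  have ht' : t ∈ Icc 0 T := ⟨P.tb_pos.le.trans ht.1, ht.2⟩
  have := P.lb_pos
  rw [P.Fa_of_ge t ht' ht.1, P.Fb_of_ge t ht' ht.1]
  field_simp

theorem q0_eq : (la * Fa 0 + lb * Fb 0) / 2 = la * alpha / 2 := by
  rw [P.Fa_zero, P.Fb_zero, mul_zero, add_zero]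

theorem queueA_eq (ht : t ∈ Icc ta tb) :
    la * Fa t + lb * Fb t - mua * t = la * alpha / 2 := by
  rw [P.input_of_mem_Icc_ta_tb ht]
  linear_combination (-1 / 2 : ℝ) * P.atom_eq

theorem queueA_ge (ht : t ∈ Ioo 0 ta ∪ Ioc tb T) :
    la * alpha / 2 ≤ la * Fa t + lb * Fb t - mua * t := by
  rcases ht with ht | ht
  · rw [P.input_of_lt_ta ⟨ht.1.le, ht.2⟩]
    have := mul_le_mul_of_nonneg_left ht.2.le P.mua_pos.le
    linarith [P.atom_eq]
  · rw [P.input_of_mem_Icc_tb_T ⟨ht.1.le, ht.2⟩]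
    have := mul_nonneg (sub_nonneg.mpr P.mua_lt_mub.le) (sub_nonneg.mpr ht.1.le)
    linarith [P.atom_eq, P.la_eq]

theorem queueB_eq (ht : t ∈ Icc tb T) :
    la * Fa t + lb * Fb t - mub * t = la - mub * tb := by
  rw [P.input_of_mem_Icc_tb_T ht]
  ring

theorem queueB_ge (ht : t ∈ Ioo 0 tb) :
    la - mub * tb ≤ la * Fa t + lb * Fb t - mub * t := by
  have hmu := sub_nonneg.mpr P.mua_lt_mub.le
  rcases lt_or_ge t ta with hta | hta
  · rw [P.input_of_lt_ta ⟨ht.1.le, hta⟩]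
    have := mul_nonneg hmu (sub_nonneg.mpr ht.2.le)
    have := mul_nonneg P.mua_pos.le (sub_nonneg.mpr hta.le)
    linarith [P.la_eq]
  · rw [P.input_of_mem_Icc_ta_tb ⟨hta, ht.2.le⟩]
    have := mul_nonneg hmu (sub_nonneg.mpr ht.2.le)
    linarith [P.la_eq]

theorem queueB_le_q0 : la - mub * tb ≤ la * alpha / 2 := by
  have := mul_le_mul_of_nonneg_right P.mua_lt_mub.le P.tb_pos.le
  linarith [P.atom_eq, P.la_eq]

theorem costA_ge (hs : s ∈ Icc 0 T) : la * alpha / 2 ≤ cost la lb mua Fa Fb s := by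
  rcases eq_or_ne s 0 with rfl | hs0
  · rw [cost_zero, P.q0_eq]
  rw [cost_of_ne_zero hs0]
  by_cases hst : s ∈ Icc ta tb
  · exact (P.queueA_eq hst).ge
  refine P.queueA_ge ?_
  simp only [mem_Icc, not_and_or, not_le] at hst
  rcases hst with h | h
  · exact Or.inl ⟨lt_of_le_of_ne hs.1 hs0.symm, h⟩
  · exact Or.inr ⟨h, hs.2⟩

theorem costB_ge (hs : s ∈ Icc 0 T) : la - mub * tb ≤ cost la lb mub Fa Fb s := by
  rcases eq_or_ne s 0 with rfl | hs0
  · rw [cost_zero, P.q0_eq]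
    exact P.queueB_le_q0
  rw [cost_of_ne_zero hs0]
  rcases lt_or_ge s tb with h | h
  · exact P.queueB_ge ⟨lt_of_le_of_ne hs.1 hs0.symm, h⟩
  · exact (P.queueB_eq ⟨h, hs.2⟩).ge

theorem Fext_Fa_of_mem_Ioo (hx : x ∈ Ioo 0 ta) : Fext T Fa x = alpha := by
  have hx' : x ∈ Icc 0 T := ⟨hx.1.le, (hx.2.trans (P.ta_lt_tb.trans P.tb_lt_T)).le⟩
  rw [Fext_of_mem_Icc hx', P.Fa_of_lt x hx' hx.2]

theorem Fext_Fa_of_lt (hx : tb < x) : Fext T Fa x = 1 := by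
  have hx0 : 0 ≤ x := P.tb_pos.le.trans hx.le
  rcases le_or_gt x T with hxT | hxT
  · rw [Fext_of_mem_Icc ⟨hx0, hxT⟩, P.Fa_of_ge x ⟨hx0, hxT⟩ hx.le]
  · rw [Fext_of_lt hx0 hxT, P.Fa_of_ge T ⟨P.T_pos.le, le_rfl⟩ P.tb_lt_T.le]

theorem Fext_Fb_of_lt (hx : x < tb) : Fext T Fb x = 0 := by
  rcases lt_or_ge x 0 with hx0 | hx0
  · exact Fext_of_neg hx0
  · have hx' : x ∈ Icc 0 T := ⟨hx0, (hx.trans P.tb_lt_T).le⟩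
    rw [Fext_of_mem_Icc hx', P.Fb_of_lt x hx' hx]

theorem mem_Icc_of_mem_fluidSupport_Fa (ht : t ∈ fluidSupport T Fa) (ht0 : t ≠ 0) :
    t ∈ Icc ta tb := by
  by_contra hout
  simp only [mem_Icc, not_and_or, not_le] at hout
  rcases hout with h | h
  · have hpos : 0 < t := lt_of_le_of_ne ht.1.1 ht0.symm
    exact notMem_fluidSupport_of_eventually_eq
      (eventually_of_mem (Ioo_mem_nhds hpos h) fun _ => P.Fext_Fa_of_mem_Ioo) ht
  · exact notMem_fluidSupport_of_eventually_eq
      (eventually_of_mem (Ioi_mem_nhds h) fun _ => P.Fext_Fa_of_lt) ht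

theorem fluidSupport_Fb_subset : fluidSupport T Fb ⊆ Icc tb T := by
  intro t ht
  refine ⟨not_lt.mp fun h => ?_, ht.1.2⟩
  exact notMem_fluidSupport_of_eventually_eq
    (eventually_of_mem (Iio_mem_nhds h) fun _ => P.Fext_Fb_of_lt) ht

theorem costA_of_mem_fluidSupport (ht : t ∈ fluidSupport T Fa) :
    cost la lb mua Fa Fb t = la * alpha / 2 := by
  rcases eq_or_ne t 0 with rfl | ht0
  · exact cost_zero.trans P.q0_eq
  · rw [cost_of_ne_zero ht0, P.queueA_eq (P.mem_Icc_of_mem_fluidSupport_Fa ht ht0)]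

theorem costB_of_mem_fluidSupport (ht : t ∈ fluidSupport T Fb) :
    cost la lb mub Fa Fb t = la - mub * tb := by
  have ht' := P.fluidSupport_Fb_subset ht
  rw [cost_of_ne_zero (P.tb_pos.trans_le ht'.1).ne', P.queueB_eq ht']

theorem isFluidNash : IsFluidNash la lb mua mub T Fa Fb :=
  isFluidNash_of_forall_le _ _ (fun _ => P.costA_of_mem_fluidSupport) (fun _ => P.costA_ge)
    (fun _ => P.costB_of_mem_fluidSupport) (fun _ => P.costB_ge)

end IsCaseIVProfile

/-- Theorem 2(iv) of the fluid model: for `λ_a/(2μ_a)+λ_b/μ_b < T ≤ λ_a/μ_a+λ_b/μ_b`,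
type-`a` customers place mass `α` at `0` and arrive with density `μ_a/λ_a` on
`[t_a,t_b]`, type-`b` customers arrive with density `μ_b/λ_b` on `[t_b,T]`;
this is a Nash equilibrium. -/
theorem fluid_equilibrium_case_iv
    (la lb mua mub T alpha ta tb : ℝ)
    (hla : 0 < la) (hlb : 0 < lb) (hmua : 0 < mua) (hmu : mua < mub)
    (hT1 : la / (2 * mua) + lb / mub < T) (hT2 : T ≤ la / mua + lb / mub)
    (halpha : alpha = (2 * mua / la) * (la / mua + lb / mub - T))
    (hta : ta = la * alpha / (2 * mua))
    (htb : tb = T - lb / mub)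
    (Fa Fb : ℝ → ℝ)
    (hFa1 : ∀ t ∈ Set.Icc (0:ℝ) T, t < ta → Fa t = alpha)
    (hFa2 : ∀ t ∈ Set.Icc (0:ℝ) T, ta ≤ t → t ≤ tb → Fa t = alpha + (mua / la) * (t - ta))
    (hFa3 : ∀ t ∈ Set.Icc (0:ℝ) T, tb ≤ t → Fa t = 1)
    (hFb1 : ∀ t ∈ Set.Icc (0:ℝ) T, t < tb → Fb t = 0)
    (hFb2 : ∀ t ∈ Set.Icc (0:ℝ) T, tb ≤ t → Fb t = (mub / lb) * (t - tb)) :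
    0 ≤ alpha ∧ alpha < 1 ∧ 0 ≤ ta ∧ ta < tb ∧ tb < T ∧
    Fa tb = 1 ∧ Fb T = 1 ∧
    (la * Fa 0 + lb * Fb 0) / 2 = la * alpha / 2 ∧
    (∀ t ∈ Set.Icc ta tb,
      la * Fa t + lb * Fb t - mua * t = la * alpha / 2) ∧
    (∀ t ∈ Set.Ioo (0:ℝ) ta ∪ Set.Ioc tb T,
      la * alpha / 2 ≤ la * Fa t + lb * Fb t - mua * t) ∧
    (∀ t ∈ Set.Icc tb T,
      la * Fa t + lb * Fb t - mub * t = la - mub * tb) ∧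
    (∀ t ∈ Set.Ioo (0:ℝ) tb,
      la - mub * tb ≤ la * Fa t + lb * Fb t - mub * t) ∧
    la - mub * tb ≤ la * alpha / 2 ∧
    IsFluidNash la lb mua mub T Fa Fb := by
  have hmub : 0 < mub := hmua.trans hmu
  have hta' : ta = la / mua + lb / mub - T := by
    rw [hta, halpha]
    field_simp
  have hhalf : la / (2 * mua) = la / mua / 2 := by rw [div_div, mul_comm]
  have P : IsCaseIVProfile la lb mua mub T alpha ta tb Fa Fb :=
    { la_pos := hla, lb_pos := hlb, mua_pos := hmua, mua_lt_mub := hmu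
      ta_nonneg := by linarith
      ta_lt_tb := by linarith
      tb_lt_T := by linarith [div_pos hlb hmub]
      atom_eq := by rw [hta]; field_simp
      la_eq := by rw [hta', htb]; field_simp; ring
      lb_eq := by rw [htb]; field_simp; ring
      Fa_of_lt := hFa1, Fa_of_mem := hFa2, Fa_of_ge := hFa3, Fb_of_lt := hFb1, Fb_of_ge := hFb2 }
  exact ⟨P.alpha_nonneg, P.alpha_lt_one, P.ta_nonneg, P.ta_lt_tb, P.tb_lt_T, P.Fa_tb, P.Fb_T,
    P.q0_eq, fun _ => P.queueA_eq, fun _ => P.queueA_ge, fun _ => P.queueB_eq,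
    fun _ => P.queueB_ge, P.queueB_le_q0, P.isFluidNash⟩
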